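/- arXiv:1910.08109 — 3 statements merged into one kernel-verified Lean document; each statement's English description precedes it below -/
import Mathlib

section
/- Let P ≪ Q be probability measures and let ı(y) = log(dP/dQ)(y). Then for any ε ≥ 0, E_{e^ε}(P‖Q) = e^ε ∫_ε^∞ e^{−t} P(ı > t) dt. -/
/-!
Write `p = dP/dQ` and `γ = e^ε`. The supremum defining `E_γ(P‖Q)` is attained at `{p > γ}`, so
`E_γ(P‖Q) = ∫ (p - γ)⁺ dQ = ∫ (1 - γ / p)⁺ dP = ∫ (1 - e^{ε - ı})⁺ dP`. Since
`(1 - e^{ε - x})⁺ = ∫_ε^∞ e^{ε - t} 𝟙{t < x} dt`, Tonelli's theorem turns the last integral into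
`∫_ε^∞ e^{ε - t} P(ı > t) dt`.
-/

open MeasureTheory

/-- The `E_γ`-divergence: `sup` over measurable sets `E` of `P(E) - γ Q(E)`. -/
noncomputable def Egamma {α : Type*} [MeasurableSpace α] (γ : ℝ) (P Q : Measure α) : ℝ :=
  ⨆ E : {E : Set α // MeasurableSet E}, ((P E).toReal - γ * (Q E).toReal)

/-- The information density `ı(y) = log (dP/dQ)(y)`. -/
noncomputable def infoDensity {α : Type*} [MeasurableSpace α] (P Q : Measure α) (y : α) : ℝ :=
  Real.log ((P.rnDeriv Q y).toReal)

open Set Real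
open scoped ENNReal

theorem lintegral_Ioo_ofReal_exp_sub (c x : ℝ) :
    ∫⁻ t in Ioo c x, ENNReal.ofReal (exp (c - t)) = ENNReal.ofReal (1 - exp (c - x)) := by
  rcases le_or_gt x c with hxc | hcx
  · rw [Ioo_eq_empty_of_le hxc, Measure.restrict_empty, lintegral_zero_measure, eq_comm,
      ENNReal.ofReal_eq_zero, sub_nonpos]
    exact one_le_exp (sub_nonneg.2 hxc)
  have hint : ∫ t in c..x, exp (c - t) = 1 - exp (c - x) := by
    simp [intervalIntegral.integral_comp_sub_left (fun t => exp t), integral_exp]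
  rw [← hint, intervalIntegral.integral_of_le hcx.le, integral_Ioc_eq_integral_Ioo,
    ofReal_integral_eq_lintegral_ofReal]
  · exact (continuous_const.sub continuous_id).rexp.integrableOn_Icc.mono_set Ioo_subset_Icc_self
  · exact Filter.Eventually.of_forall fun t => (exp_pos _).le

theorem lintegral_Ioi_ofReal_exp_sub_mul_measure_lt {α : Type*} [MeasurableSpace α]
    {μ : Measure α} [SFinite μ] {f : α → ℝ} (hf : Measurable f) (c : ℝ) :
    ∫⁻ t in Ioi c, ENNReal.ofReal (exp (c - t)) * μ {y | t < f y}
      = ∫⁻ y, ENNReal.ofReal (1 - exp (c - f y)) ∂μ := by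
  have hmeas : Measurable fun p : ℝ × α =>
      {p : ℝ × α | p.1 < f p.2}.indicator (fun p => ENNReal.ofReal (exp (c - p.1))) p :=
    (measurable_const.sub measurable_fst).exp.ennreal_ofReal.indicator
      (measurableSet_lt measurable_fst (hf.comp measurable_snd))
  have hslice (t : ℝ) : ENNReal.ofReal (exp (c - t)) * μ {y | t < f y}
      = ∫⁻ y, (Iio (f y)).indicator (fun s => ENNReal.ofReal (exp (c - s))) t ∂μ :=
    (lintegral_indicator_const (measurableSet_lt measurable_const hf) _).symm
  simp_rw [hslice]
  rw [lintegral_lintegral_swap hmeas.aemeasurable]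
  simp_rw [lintegral_indicator measurableSet_Iio, Measure.restrict_restrict measurableSet_Iio,
    Iio_inter_Ioi, lintegral_Ioo_ofReal_exp_sub]

theorem ofReal_mul_ofReal_one_sub_exp_sub_log {x : ℝ} (hx : 0 ≤ x) (c : ℝ) :
    ENNReal.ofReal x * ENNReal.ofReal (1 - exp (c - log x))
      = ENNReal.ofReal x - ENNReal.ofReal (exp c) := by
  rcases hx.eq_or_lt with rfl | hx
  · simp
  rw [← ENNReal.ofReal_mul hx.le, ← ENNReal.ofReal_sub _ (exp_pos c).le, exp_sub, exp_log hx,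
    mul_one_sub, mul_div_cancel₀ _ hx.ne']

theorem measurable_infoDensity {α : Type*} [MeasurableSpace α] (P Q : Measure α) :
    Measurable (infoDensity P Q) :=
  measurable_log.comp (Measure.measurable_rnDeriv P Q).ennreal_toReal

section RadonNikodym

variable {α : Type*} [MeasurableSpace α] {P Q : Measure α}

theorem measure_le_lintegral_rnDeriv_sub_add [P.HaveLebesgueDecomposition Q] [SFinite Q]
    (hPQ : P ≪ Q) (γ : ℝ≥0∞) (E : Set α) :
    P E ≤ ∫⁻ y, (P.rnDeriv Q y - γ) ∂Q + γ * Q E :=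
  calc P E = ∫⁻ y in E, P.rnDeriv Q y ∂Q := (Measure.setLIntegral_rnDeriv hPQ E).symm
    _ ≤ ∫⁻ y in E, (P.rnDeriv Q y - γ + γ) ∂Q := lintegral_mono fun _ => le_tsub_add
    _ = ∫⁻ y in E, (P.rnDeriv Q y - γ) ∂Q + γ * Q E := by
      rw [lintegral_add_right _ measurable_const, setLIntegral_const]
    _ ≤ ∫⁻ y, (P.rnDeriv Q y - γ) ∂Q + γ * Q E := add_le_add_left (setLIntegral_le_lintegral _ _) _

theorem measure_setOf_lt_rnDeriv [P.HaveLebesgueDecomposition Q] (hPQ : P ≪ Q) (γ : ℝ≥0∞) :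
    P {y | γ < P.rnDeriv Q y}
      = ∫⁻ y, (P.rnDeriv Q y - γ) ∂Q + γ * Q {y | γ < P.rnDeriv Q y} := by
  set A := {y | γ < P.rnDeriv Q y}
  have hA : MeasurableSet A := measurableSet_lt measurable_const (Measure.measurable_rnDeriv P Q)
  have hsupp : (fun y => P.rnDeriv Q y - γ).support ⊆ A := fun y hy =>
    lt_of_not_ge fun hle => hy (tsub_eq_zero_of_le hle)
  calc P A = ∫⁻ y in A, P.rnDeriv Q y ∂Q := (Measure.setLIntegral_rnDeriv' hPQ hA).symm
    _ = ∫⁻ y in A, (P.rnDeriv Q y - γ + γ) ∂Q :=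
      setLIntegral_congr_fun hA fun y hy => (tsub_add_cancel_of_le (le_of_lt hy)).symm
    _ = ∫⁻ y, (P.rnDeriv Q y - γ) ∂Q + γ * Q A := by
      rw [lintegral_add_right _ measurable_const, setLIntegral_const,
        setLIntegral_eq_of_support_subset hsupp]

theorem egamma_eq_toReal_lintegral_rnDeriv_sub [IsFiniteMeasure P] [IsFiniteMeasure Q]
    (hPQ : P ≪ Q) {γ : ℝ} (hγ : 0 ≤ γ) :
    Egamma γ P Q = (∫⁻ y, (P.rnDeriv Q y - ENNReal.ofReal γ) ∂Q).toReal := by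
  set D := ∫⁻ y, (P.rnDeriv Q y - ENNReal.ofReal γ) ∂Q
  have hD : D ≠ ∞ := by
    refine ne_top_of_le_ne_top (measure_ne_top P univ) ?_
    rw [← Measure.lintegral_rnDeriv hPQ]
    exact lintegral_mono fun _ => tsub_le_self
  have hsplit (E : Set α) :
      (D + ENNReal.ofReal γ * Q E).toReal = D.toReal + γ * (Q E).toReal := by
    rw [ENNReal.toReal_add hD (by finiteness), ENNReal.toReal_mul, ENNReal.toReal_ofReal hγ]
  have hle (E : {E : Set α // MeasurableSet E}) : (P E).toReal - γ * (Q E).toReal ≤ D.toReal := by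
    have := ENNReal.toReal_mono (by finiteness) (measure_le_lintegral_rnDeriv_sub_add hPQ _ E)
    linarith [hsplit E]
  let A : {E : Set α // MeasurableSet E} :=
    ⟨{y | ENNReal.ofReal γ < P.rnDeriv Q y},
      measurableSet_lt measurable_const (Measure.measurable_rnDeriv P Q)⟩
  have hA : (P A).toReal - γ * (Q A).toReal = D.toReal := by
    have := congrArg ENNReal.toReal (measure_setOf_lt_rnDeriv hPQ (ENNReal.ofReal γ))
    linarith [hsplit A]
  exact le_antisymm (ciSup_le hle) (le_ciSup_of_le ⟨_, forall_mem_range.2 hle⟩ A hA.ge)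

/-- The junk value `log 0 = 0` of `infoDensity` on `{dP/dQ = 0}` is harmless: that set is
`P`-null. -/
theorem lintegral_ofReal_one_sub_exp_sub_infoDensity [SigmaFinite P] [SigmaFinite Q]
    (hPQ : P ≪ Q) (c : ℝ) :
    ∫⁻ y, ENNReal.ofReal (1 - exp (c - infoDensity P Q y)) ∂P
      = ∫⁻ y, (P.rnDeriv Q y - ENNReal.ofReal (exp c)) ∂Q := by
  have hmeas : Measurable fun y => ENNReal.ofReal (1 - exp (c - infoDensity P Q y)) := by
    have := measurable_infoDensity P Q
    fun_prop
  rw [← lintegral_rnDeriv_mul hPQ hmeas.aemeasurable]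
  refine lintegral_congr_ae ?_
  filter_upwards [Measure.rnDeriv_lt_top P Q] with y hy
  simpa only [ENNReal.ofReal_toReal hy.ne, infoDensity] using
    ofReal_mul_ofReal_one_sub_exp_sub_log (x := (P.rnDeriv Q y).toReal) ENNReal.toReal_nonneg c

end RadonNikodym

theorem egamma_eq_tail_integral_general {α : Type*} [MeasurableSpace α]
    (P Q : Measure α) [IsProbabilityMeasure P] [IsProbabilityMeasure Q]
    (hPQ : P ≪ Q) (ε : ℝ) :
    Egamma (Real.exp ε) P Q
      = Real.exp ε *
        ∫ t in Set.Ioi ε, Real.exp (-t) * (P {y | t < infoDensity P Q y}).toReal := by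
  have htail_anti : Antitone fun t : ℝ => P {y | t < infoDensity P Q y} :=
    fun _ _ hst => measure_mono fun _ hy => lt_of_le_of_lt hst hy
  have hmeas : Measurable fun t => ENNReal.ofReal (exp (ε - t)) * P {y | t < infoDensity P Q y} :=
    (measurable_const.sub measurable_id).exp.ennreal_ofReal.mul htail_anti.measurable
  calc Egamma (exp ε) P Q
      = (∫⁻ y, (P.rnDeriv Q y - ENNReal.ofReal (exp ε)) ∂Q).toReal :=
        egamma_eq_toReal_lintegral_rnDeriv_sub hPQ (exp_pos ε).le
    _ = (∫⁻ t in Ioi ε, ENNReal.ofReal (exp (ε - t)) * P {y | t < infoDensity P Q y}).toReal := by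
        rw [lintegral_Ioi_ofReal_exp_sub_mul_measure_lt (measurable_infoDensity P Q),
          lintegral_ofReal_one_sub_exp_sub_infoDensity hPQ]
    _ = ∫ t in Ioi ε, exp (ε - t) * (P {y | t < infoDensity P Q y}).toReal := by
        rw [← integral_toReal hmeas.aemeasurable
          (Filter.Eventually.of_forall fun _ => by finiteness)]
        simp only [ENNReal.toReal_mul, ENNReal.toReal_ofReal (exp_pos _).le]
    _ = exp ε * ∫ t in Ioi ε, exp (-t) * (P {y | t < infoDensity P Q y}).toReal := by
        rw [← integral_const_mul]
        simp only [sub_eq_add_neg, exp_add, mul_assoc]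

/-- Tail distribution formula: `E_{e^ε}(P‖Q) = e^ε ∫_ε^∞ e^{-t} P(ı > t) dt`. -/
theorem egamma_eq_tail_integral {α : Type*} [MeasurableSpace α]
    (P Q : Measure α) [IsProbabilityMeasure P] [IsProbabilityMeasure Q]
    (hPQ : P ≪ Q) (ε : ℝ) (hε : 0 ≤ ε) :
    Egamma (Real.exp ε) P Q
      = Real.exp ε *
        ∫ t in Set.Ioi ε, Real.exp (-t) * (P {y | t < infoDensity P Q y}).toReal :=
  egamma_eq_tail_integral_general P Q hPQ ε
end

section
/- For two multivariate Gaussians with common covariance λ²I_r and means μ₁, μ₂, letting β = ‖μ₁ − μ₂‖/λ, one has E_γ(N(μ₁, λ²I_r) ‖ N(μ₂, λ²I_r)) = Q(log γ / β − β/2) − γ Q(log γ / β + β/2), where Q(v) = P(N(0,1) ≥ v). -/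
open MeasureTheory

/-- The `r`-dimensional Gaussian measure `N(μ, λ² I_r)`, defined by its density with
respect to the Lebesgue measure on `ℝ^r`. -/
noncomputable def gaussianEuclidean {r : ℕ} (μ : EuclideanSpace ℝ (Fin r)) (l : ℝ) :
    Measure (EuclideanSpace ℝ (Fin r)) :=
  volume.withDensity fun x =>
    ENNReal.ofReal
      (Real.rpow (2 * Real.pi * l ^ 2) (-(r : ℝ) / 2) * Real.exp (-‖x - μ‖ ^ 2 / (2 * l ^ 2)))

/-- The standard Gaussian tail function `Q(v) = ∫_v^∞ (1/√(2π)) e^{-t²/2} dt`. -/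
noncomputable def gaussTail (v : ℝ) : ℝ :=
  ∫ t in Set.Ioi v, Real.exp (-t ^ 2 / 2) / Real.sqrt (2 * Real.pi)

/-!
For measures with densities `p` and `q`, the supremum defining `E_γ` is attained on the
likelihood-ratio set `{γ q ≤ p}` (Neyman–Pearson). For two Gaussians with the same covariance
`λ² I` the log-likelihood ratio is affine, so this set is a half-space `{x | c ≤ ⟪u, x⟫}` with
`u = (μ₁ - μ₂) / ‖μ₁ - μ₂‖`. In an orthonormal basis containing `u` the Gaussian is a product of
one-dimensional Gaussians, so `⟪u, ·⟫` has law `N(⟪u, μ⟫, λ²)` and both half-space probabilities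
are Gaussian tails, at the thresholds `log γ / β ∓ β / 2`.
-/

open Set ENNReal ProbabilityTheory Real
open scoped RealInnerProductSpace

section NeymanPearson

variable {α : Type*} [MeasurableSpace α]

lemma Egamma_eq_of_forall_le {γ : ℝ} {P Q : Measure α} {A : Set α} (hA : MeasurableSet A)
    (hmax : ∀ E, MeasurableSet E →
      (P E).toReal - γ * (Q E).toReal ≤ (P A).toReal - γ * (Q A).toReal) :
    Egamma γ P Q = (P A).toReal - γ * (Q A).toReal :=
  le_antisymm (ciSup_le fun E ↦ hmax E E.2)
    (le_ciSup (f := fun E : {E : Set α // MeasurableSet E} ↦ (P E).toReal - γ * (Q E).toReal)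
      ⟨_, forall_mem_range.2 fun E ↦ hmax E E.2⟩ ⟨A, hA⟩)

variable {μ : Measure α} {f g : α → ℝ}

lemma toReal_withDensity_ofReal_apply (hf : Integrable f μ) (hf0 : 0 ≤ f) {s : Set α}
    (hs : MeasurableSet s) :
    (μ.withDensity (fun x ↦ ENNReal.ofReal (f x)) s).toReal = ∫ x in s, f x ∂μ := by
  rw [withDensity_apply _ hs, ← ofReal_integral_eq_lintegral_ofReal hf.integrableOn
    (.of_forall hf0), toReal_ofReal (setIntegral_nonneg hs fun x _ ↦ hf0 x)]

theorem Egamma_withDensity_ofReal (γ : ℝ) (hf : Integrable f μ) (hg : Integrable g μ)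
    (hfm : Measurable f) (hgm : Measurable g) (hf0 : 0 ≤ f) (hg0 : 0 ≤ g) :
    Egamma γ (μ.withDensity fun x ↦ ENNReal.ofReal (f x))
        (μ.withDensity fun x ↦ ENNReal.ofReal (g x)) =
      (μ.withDensity (fun x ↦ ENNReal.ofReal (f x)) {x | γ * g x ≤ f x}).toReal -
        γ * (μ.withDensity (fun x ↦ ENNReal.ofReal (g x)) {x | γ * g x ≤ f x}).toReal := by
  have hA : MeasurableSet {x | γ * g x ≤ f x} := measurableSet_le (hgm.const_mul γ) hfm
  have hval : ∀ E, MeasurableSet E →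
      (μ.withDensity (fun x ↦ ENNReal.ofReal (f x)) E).toReal -
        γ * (μ.withDensity (fun x ↦ ENNReal.ofReal (g x)) E).toReal
        = ∫ x in E, (f x - γ * g x) ∂μ := fun E hE ↦ by
    rw [toReal_withDensity_ofReal_apply hf hf0 hE, toReal_withDensity_ofReal_apply hg hg0 hE,
      integral_sub hf.integrableOn (hg.const_mul γ).integrableOn, integral_const_mul]
  refine Egamma_eq_of_forall_le hA fun E hE ↦ ?_
  rw [hval E hE, hval _ hA]
  simpa only [Pi.sub_apply, sub_nonneg] using setIntegral_le_nonneg hE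
    (hfm.sub (hgm.const_mul γ)).stronglyMeasurable (hf.sub (hg.const_mul γ))

end NeymanPearson

section GaussianReal

lemma toReal_gaussianReal_zero_one_Ici (v : ℝ) :
    (gaussianReal 0 1 (Ici v)).toReal = gaussTail v := by
  rw [gaussianReal_apply_eq_integral _ one_ne_zero, toReal_ofReal
    (setIntegral_nonneg measurableSet_Ici fun _ _ ↦ gaussianPDFReal_nonneg _ _ _),
    integral_Ici_eq_integral_Ioi, gaussTail]
  simp [gaussianPDFReal, div_eq_inv_mul]

lemma toReal_gaussianReal_Ici {l : ℝ} (hl : 0 < l) (a c : ℝ) :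
    (gaussianReal a (l ^ 2).toNNReal (Ici c)).toReal = gaussTail ((c - a) / l) := by
  have hmap : (gaussianReal 0 1).map (fun x ↦ l * x + a) = gaussianReal a (l ^ 2).toNNReal := by
    rw [show (fun x ↦ l * x + a) = (· + a) ∘ (l * ·) from rfl,
      ← Measure.map_map (by fun_prop) (by fun_prop), gaussianReal_map_const_mul,
      gaussianReal_map_add_const, mul_zero, zero_add, mul_one]
    congr
    simp [sq_nonneg]
  have hpre : (fun x ↦ l * x + a) ⁻¹' Ici c = Ici ((c - a) / l) := by
    ext x
    simp only [mem_preimage, mem_Ici, div_le_iff₀ hl, sub_le_iff_le_add, mul_comm x]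
  rw [← hmap, Measure.map_apply (by fun_prop) measurableSet_Ici, hpre,
    toReal_gaussianReal_zero_one_Ici]

end GaussianReal

section OrthonormalCoordinates

lemma setIntegral_univ_pi_prod {ι : Type*} [Fintype ι] {X : ι → Type*}
    [∀ i, MeasurableSpace (X i)] (μ : ∀ i, Measure (X i)) [∀ i, SigmaFinite (μ i)]
    (f : ∀ i, X i → ℝ) (s : ∀ i, Set (X i)) :
    ∫ x in univ.pi s, ∏ i, f i (x i) ∂Measure.pi μ = ∏ i, ∫ y in s i, f i y ∂μ i := by
  rw [Measure.restrict_pi_pi, integral_fintype_prod_eq_prod]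

variable {ι F : Type*} [Fintype ι] [NormedAddCommGroup F] [InnerProductSpace ℝ F]
  [FiniteDimensional ℝ F]

noncomputable def OrthonormalBasis.measurableEquivPi [MeasurableSpace F] [BorelSpace F]
    (b : OrthonormalBasis ι ℝ F) : F ≃ᵐ (ι → ℝ) :=
  b.measurableEquiv.trans (MeasurableEquiv.toLp 2 (ι → ℝ)).symm

lemma OrthonormalBasis.measurePreserving_measurableEquivPi [MeasurableSpace F] [BorelSpace F]
    (b : OrthonormalBasis ι ℝ F) : MeasurePreserving b.measurableEquivPi volume volume :=
  (EuclideanSpace.volume_preserving_symm_measurableEquiv_toLp ι).comp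
    b.measurePreserving_measurableEquiv

lemma exists_orthonormalBasis_repr_eq_inner (hcard : Module.finrank ℝ F = Fintype.card ι)
    {u : F} (hu : ‖u‖ = 1) : ∃ (b : OrthonormalBasis ι ℝ F) (i : ι), ∀ x, b.repr x i = ⟪u, x⟫ := by
  obtain ⟨i⟩ : Nonempty ι := by
    rw [← Fintype.card_pos_iff, ← hcard]
    exact Module.finrank_pos_iff_exists_ne_zero.2 ⟨u, norm_ne_zero_iff.1 (hu ▸ one_ne_zero)⟩
  have hu' : Orthonormal ℝ (({i} : Set ι).domRestrict fun _ ↦ u) :=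
    ⟨fun _ ↦ hu, fun j k hjk ↦ (hjk (Subsingleton.elim j k)).elim⟩
  obtain ⟨b, hb⟩ := hu'.exists_orthonormalBasis_extension_of_card_eq hcard
  exact ⟨b, i, fun x ↦ by rw [b.repr_apply_apply, hb i rfl]⟩

end OrthonormalCoordinates

section GaussianEuclidean

variable {r : ℕ}

noncomputable def gaussianDensity (m : EuclideanSpace ℝ (Fin r)) (l : ℝ)
    (x : EuclideanSpace ℝ (Fin r)) : ℝ :=
  Real.rpow (2 * π * l ^ 2) (-(r : ℝ) / 2) * exp (-‖x - m‖ ^ 2 / (2 * l ^ 2))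

lemma gaussianEuclidean_eq_withDensity (m : EuclideanSpace ℝ (Fin r)) (l : ℝ) :
    gaussianEuclidean m l = volume.withDensity fun x ↦ ENNReal.ofReal (gaussianDensity m l x) :=
  rfl

lemma gaussianDensity_nonneg (m : EuclideanSpace ℝ (Fin r)) (l : ℝ) : 0 ≤ gaussianDensity m l :=
  fun _ ↦ mul_nonneg (rpow_nonneg (by positivity) _) (exp_nonneg _)

lemma continuous_gaussianDensity (m : EuclideanSpace ℝ (Fin r)) (l : ℝ) :
    Continuous (gaussianDensity m l) := by
  unfold gaussianDensity
  fun_prop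

lemma gaussianDensity_eq_prod {l : ℝ} (hl : l ≠ 0)
    (b : OrthonormalBasis (Fin r) ℝ (EuclideanSpace ℝ (Fin r))) (m x : EuclideanSpace ℝ (Fin r)) :
    gaussianDensity m l x
      = ∏ i, gaussianPDFReal (b.repr m i) (l ^ 2).toNNReal (b.measurableEquivPi x i) := by
  have hA : 0 < 2 * π * l ^ 2 := by positivity
  have hnorm : ‖x - m‖ ^ 2 = ∑ i, (b.repr x i - b.repr m i) ^ 2 := by
    rw [← b.repr.norm_map, EuclideanSpace.norm_sq_eq]
    simp [Real.norm_eq_abs, sq_abs]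
  simp only [gaussianDensity, gaussianPDFReal, Real.coe_toNNReal _ (sq_nonneg l),
    Finset.prod_mul_distrib, Finset.prod_const, Finset.card_univ, Fintype.card_fin, ← exp_sum,
    hnorm]
  congr 1
  · rw [sqrt_eq_rpow, ← rpow_neg hA.le, ← Real.rpow_natCast _ r, ← rpow_mul hA.le, Real.rpow_eq_pow]
    ring_nf
  · rw [← Finset.sum_div, ← Finset.sum_neg_distrib]
    rfl

lemma integrable_gaussianDensity {l : ℝ} (hl : l ≠ 0) (m : EuclideanSpace ℝ (Fin r)) :
    Integrable (gaussianDensity m l) := by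
  let b := EuclideanSpace.basisFun (Fin r) ℝ
  have hprod : Integrable fun z : Fin r → ℝ ↦
      ∏ i, gaussianPDFReal (b.repr m i) (l ^ 2).toNNReal (z i) :=
    Integrable.fintype_prod fun _ ↦ integrable_gaussianPDFReal _ _
  refine (((b.measurePreserving_measurableEquivPi).integrable_comp_emb
    b.measurableEquivPi.measurableEmbedding).mpr hprod).congr (.of_forall fun x ↦ ?_)
  exact (gaussianDensity_eq_prod hl b m x).symm

lemma map_measurableEquivPi_gaussianEuclidean {l : ℝ} (hl : l ≠ 0)
    (b : OrthonormalBasis (Fin r) ℝ (EuclideanSpace ℝ (Fin r))) (m : EuclideanSpace ℝ (Fin r)) :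
    (gaussianEuclidean m l).map b.measurableEquivPi
      = Measure.pi fun i ↦ gaussianReal (b.repr m i) (l ^ 2).toNNReal := by
  have hv : (l ^ 2).toNNReal ≠ 0 := by simpa using hl
  refine (Measure.pi_eq fun s hs ↦ ?_).symm
  have hprod : Integrable fun z : Fin r → ℝ ↦
      ∏ i, gaussianPDFReal (b.repr m i) (l ^ 2).toNNReal (z i) :=
    Integrable.fintype_prod fun _ ↦ integrable_gaussianPDFReal _ _
  rw [Measure.map_apply b.measurableEquivPi.measurable (.univ_pi hs),
    gaussianEuclidean_eq_withDensity,
    withDensity_apply _ (b.measurableEquivPi.measurable (.univ_pi hs))]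
  simp_rw [gaussianDensity_eq_prod hl b]
  rw [(b.measurePreserving_measurableEquivPi).setLIntegral_comp_preimage_emb
      b.measurableEquivPi.measurableEmbedding
      (fun z ↦ ENNReal.ofReal (∏ i, gaussianPDFReal (b.repr m i) (l ^ 2).toNNReal (z i))),
    ← ofReal_integral_eq_lintegral_ofReal hprod.integrableOn
      (.of_forall fun _ ↦ Finset.prod_nonneg fun _ _ ↦ gaussianPDFReal_nonneg _ _ _),
    volume_pi, setIntegral_univ_pi_prod, ofReal_prod_of_nonneg
      fun _ _ ↦ setIntegral_nonneg (hs _) fun _ _ ↦ gaussianPDFReal_nonneg _ _ _]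
  simp_rw [gaussianReal_apply_eq_integral _ hv]

lemma map_inner_gaussianEuclidean {l : ℝ} (hl : l ≠ 0) (m : EuclideanSpace ℝ (Fin r))
    {u : EuclideanSpace ℝ (Fin r)} (hu : ‖u‖ = 1) :
    (gaussianEuclidean m l).map (fun x ↦ ⟪u, x⟫) = gaussianReal ⟪u, m⟫ (l ^ 2).toNNReal := by
  obtain ⟨b, i, hb⟩ := exists_orthonormalBasis_repr_eq_inner (ι := Fin r) (by simp) hu
  have : (fun x ↦ ⟪u, x⟫) = Function.eval i ∘ b.measurableEquivPi := funext fun x ↦ (hb x).symm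
  rw [this, ← Measure.map_map (measurable_pi_apply i) b.measurableEquivPi.measurable,
    map_measurableEquivPi_gaussianEuclidean hl, (measurePreserving_eval _ i).map_eq, hb]

lemma toReal_gaussianEuclidean_setOf_le_inner {l : ℝ} (hl : 0 < l)
    (m : EuclideanSpace ℝ (Fin r)) {u : EuclideanSpace ℝ (Fin r)} (hu : ‖u‖ = 1) (c : ℝ) :
    (gaussianEuclidean m l {x | c ≤ ⟪u, x⟫}).toReal = gaussTail ((c - ⟪u, m⟫) / l) := by
  rw [← toReal_gaussianReal_Ici hl, ← map_inner_gaussianEuclidean hl.ne' m hu,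
    Measure.map_apply (by fun_prop) measurableSet_Ici]
  rfl

lemma Egamma_gaussianEuclidean (γ : ℝ) {l : ℝ} (hl : l ≠ 0) (m₁ m₂ : EuclideanSpace ℝ (Fin r)) :
    Egamma γ (gaussianEuclidean m₁ l) (gaussianEuclidean m₂ l) =
      (gaussianEuclidean m₁ l {x | γ * gaussianDensity m₂ l x ≤ gaussianDensity m₁ l x}).toReal -
        γ * (gaussianEuclidean m₂ l
          {x | γ * gaussianDensity m₂ l x ≤ gaussianDensity m₁ l x}).toReal :=
  Egamma_withDensity_ofReal γ (integrable_gaussianDensity hl m₁) (integrable_gaussianDensity hl m₂)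
    (continuous_gaussianDensity m₁ l).measurable (continuous_gaussianDensity m₂ l).measurable
    (gaussianDensity_nonneg m₁ l) (gaussianDensity_nonneg m₂ l)

lemma setOf_mul_gaussianDensity_le {γ l d : ℝ} (hγ : 0 < γ) (hl : 0 < l) (hd : 0 < d)
    {m₁ m₂ u : EuclideanSpace ℝ (Fin r)} (hu : ‖u‖ = 1) (hm : m₁ - m₂ = d • u) :
    {x | γ * gaussianDensity m₂ l x ≤ gaussianDensity m₁ l x} =
      {x | ⟪u, m₁⟫ + l * (log γ / (d / l) - d / l / 2) ≤ ⟪u, x⟫} := by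
  ext x
  have hK : 0 < Real.rpow (2 * π * l ^ 2) (-(r : ℝ) / 2) := rpow_pos_of_pos (by positivity) _
  set t := ⟪u, x⟫ - ⟪u, m₁⟫
  have hsq : ‖x - m₂‖ ^ 2 = ‖x - m₁‖ ^ 2 + 2 * d * t + d ^ 2 := by
    rw [show x - m₂ = (x - m₁) + d • u by rw [← hm]; abel, norm_add_sq_real, inner_smul_right,
      norm_smul, hu, real_inner_comm, inner_sub_right, Real.norm_of_nonneg hd.le]
    ring
  rw [mem_ofPred_eq, mem_ofPred_eq, gaussianDensity, gaussianDensity, mul_left_comm,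
    mul_le_mul_iff_right₀ hK]
  nth_rw 1 [← exp_log hγ]
  rw [← exp_add, exp_le_exp, hsq, ← sub_nonneg, ← sub_nonneg (b := _ + _)]
  have e₁ : -‖x - m₁‖ ^ 2 / (2 * l ^ 2)
        - (log γ + -(‖x - m₁‖ ^ 2 + 2 * d * t + d ^ 2) / (2 * l ^ 2))
      = (2 * d * t + d ^ 2 - 2 * l ^ 2 * log γ) / (2 * l ^ 2) := by
    field_simp
    ring
  have e₂ : ⟪u, x⟫ - (⟪u, m₁⟫ + l * (log γ / (d / l) - d / l / 2))
      = (2 * d * t + d ^ 2 - 2 * l ^ 2 * log γ) / (2 * d) := by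
    field_simp
    ring
  rw [e₁, e₂, le_div_iff₀ (by positivity), le_div_iff₀ (by positivity), zero_mul, zero_mul]

end GaussianEuclidean

/-- `E_γ` between two isotropic Gaussians with common covariance `λ² I_r`:
with `β = ‖μ₁ - μ₂‖/λ`,
`E_γ(N(μ₁,λ²I) ‖ N(μ₂,λ²I)) = Q(log γ/β - β/2) - γ Q(log γ/β + β/2)`. -/
theorem egamma_gaussian_formula {r : ℕ} (γ : ℝ) (hγ : 1 ≤ γ) (l : ℝ) (hl : 0 < l)
    (μ₁ μ₂ : EuclideanSpace ℝ (Fin r)) (hμ : μ₁ ≠ μ₂) :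
    Egamma γ (gaussianEuclidean μ₁ l) (gaussianEuclidean μ₂ l)
      = gaussTail (Real.log γ / (‖μ₁ - μ₂‖ / l) - (‖μ₁ - μ₂‖ / l) / 2)
        - γ * gaussTail (Real.log γ / (‖μ₁ - μ₂‖ / l) + (‖μ₁ - μ₂‖ / l) / 2) := by
  set d := ‖μ₁ - μ₂‖
  set u := d⁻¹ • (μ₁ - μ₂)
  have hd : 0 < d := norm_pos_iff.2 (sub_ne_zero.2 hμ)
  have hu : ‖u‖ = 1 := by simp [u, d, norm_smul, hd.ne']
  have hm : μ₁ - μ₂ = d • u := by simp [u, smul_smul, hd.ne']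
  have hu₂ : ⟪u, μ₂⟫ = ⟪u, μ₁⟫ - d := by
    rw [eq_sub_iff_add_eq, ← eq_sub_iff_add_eq', ← inner_sub_right, hm, inner_smul_right,
      real_inner_self_eq_norm_sq, hu, one_pow, mul_one]
  rw [Egamma_gaussianEuclidean γ hl.ne', setOf_mul_gaussianDensity_le (by linarith) hl hd hu hm,
    toReal_gaussianEuclidean_setOf_le_inner hl _ hu,
    toReal_gaussianEuclidean_setOf_le_inner hl _ hu, hu₂]
  congr 3 <;> field_simp <;> ring
end

section
/- For one-dimensional Gaussians, the map a ↦ E_γ(N(a, λ²) ‖ N(0, λ²)) is non-decreasing in a ≥ 0 for each fixed λ > 0 and γ ≥ 1. -/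
/-!
For `a > 0` the likelihood ratio of `N(a, λ²)` to `N(0, λ²)` is increasing in `x`, so by the
Neyman–Pearson argument the supremum defining `E_γ` is attained on a half-line `[t, ∞)`.
Shifting everything by `b - a` carries `N(a, λ²)[t, ∞)` to `N(b, λ²)[t + b - a, ∞)` while only
decreasing the `N(0, λ²)`-mass of the half-line, so the value at `b` is at least the value at `a`.
For `a = 0` the divergence vanishes since `γ ≥ 1`.
-/

open MeasureTheory ProbabilityTheory

open Set Real
open scoped NNReal

section Egamma

variable {α : Type*} [MeasurableSpace α] {γ : ℝ} {P Q : Measure α}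

lemma le_Egamma [IsFiniteMeasure P] (hγ : 0 ≤ γ) {A : Set α} (hA : MeasurableSet A) :
    P.real A - γ * Q.real A ≤ Egamma γ P Q := by
  refine le_ciSup (f := fun E : {E : Set α // MeasurableSet E} ↦ P.real E - γ * Q.real E)
    ⟨P.real univ, forall_mem_range.2 fun E ↦ ?_⟩ ⟨A, hA⟩
  have := mul_nonneg hγ (measureReal_nonneg (μ := Q) (s := E))
  have := measureReal_mono (μ := P) (subset_univ (E : Set α))
  linarith

lemma Egamma_nonneg [IsFiniteMeasure P] (hγ : 0 ≤ γ) : 0 ≤ Egamma γ P Q := by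
  simpa using le_Egamma (Q := Q) hγ MeasurableSet.empty

lemma Egamma_self_nonpos (hγ : 1 ≤ γ) (P : Measure α) : Egamma γ P P ≤ 0 :=
  Real.iSup_nonpos fun _ ↦ sub_nonpos.2 (le_mul_of_one_le_left ENNReal.toReal_nonneg hγ)

lemma Egamma_eq_of_neymanPearson [IsFiniteMeasure P] [IsFiniteMeasure Q] {S : Set α}
    (hS : MeasurableSet S)
    (h_in : ∀ A, MeasurableSet A → A ⊆ S → γ * Q.real A ≤ P.real A)
    (h_out : ∀ A, MeasurableSet A → A ⊆ Sᶜ → P.real A ≤ γ * Q.real A) :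
    Egamma γ P Q = P.real S - γ * Q.real S := by
  have h_max : ∀ A, MeasurableSet A → P.real A - γ * Q.real A ≤ P.real S - γ * Q.real S := by
    intro A hA
    have hPA := measureReal_inter_add_sdiff (μ := P) (s := A) hS
    have hQA := measureReal_inter_add_sdiff (μ := Q) (s := A) hS
    have hPS := measureReal_inter_add_sdiff (μ := P) (s := S) hA
    have hQS := measureReal_inter_add_sdiff (μ := Q) (s := S) hA
    rw [inter_comm] at hPS hQS
    have := h_in (S \ A) (hS.diff hA) sdiff_subset
    have := h_out (A \ S) (hA.diff hS) fun _ hx ↦ hx.2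
    rw [← hQA, ← hQS, mul_add, mul_add]
    linarith
  have : Nonempty {E : Set α // MeasurableSet E} := ⟨⟨S, hS⟩⟩
  exact le_antisymm (ciSup_le fun E ↦ h_max E E.2)
    (le_ciSup (f := fun E : {E : Set α // MeasurableSet E} ↦ P.real E - γ * Q.real E)
      ⟨_, forall_mem_range.2 fun E ↦ h_max E E.2⟩ ⟨S, hS⟩)

end Egamma

section Gaussian

variable {v : ℝ≥0}

lemma gaussianPDFReal_eq_mul_exp (a x : ℝ) :
    gaussianPDFReal a v x = gaussianPDFReal 0 v x * exp ((2 * a * x - a ^ 2) / (2 * v)) := by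
  simp only [gaussianPDFReal, mul_assoc, ← exp_add]
  ring_nf

lemma mul_gaussianPDFReal_zero_le_iff {γ a : ℝ} (hγ : 0 < γ) (hv : v ≠ 0) (ha : 0 < a) (x : ℝ) :
    γ * gaussianPDFReal 0 v x ≤ gaussianPDFReal a v x ↔ (2 * v * log γ + a ^ 2) / (2 * a) ≤ x := by
  rw [gaussianPDFReal_eq_mul_exp a, mul_comm γ,
    mul_le_mul_iff_right₀ (gaussianPDFReal_pos _ _ _ hv), ← log_le_iff_le_exp hγ,
    le_div_iff₀ (by positivity), div_le_iff₀ (by positivity)]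
  constructor <;> intro h <;> linarith

lemma gaussianReal_real_eq_setIntegral (m : ℝ) (hv : v ≠ 0) (A : Set ℝ) :
    (gaussianReal m v).real A = ∫ x in A, gaussianPDFReal m v x := by
  rw [measureReal_def, gaussianReal_apply_eq_integral m hv,
    ENNReal.toReal_ofReal (integral_nonneg fun x ↦ gaussianPDFReal_nonneg m v x)]

lemma mul_gaussianReal_real_le_mul (hv : v ≠ 0) {c₁ c₂ m₁ m₂ : ℝ} {A : Set ℝ}
    (hA : MeasurableSet A)
    (h : ∀ x ∈ A, c₁ * gaussianPDFReal m₁ v x ≤ c₂ * gaussianPDFReal m₂ v x) :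
    c₁ * (gaussianReal m₁ v).real A ≤ c₂ * (gaussianReal m₂ v).real A := by
  simp only [gaussianReal_real_eq_setIntegral _ hv, ← integral_const_mul]
  exact setIntegral_mono_on ((integrable_gaussianPDFReal _ _).const_mul c₁).integrableOn
    ((integrable_gaussianPDFReal _ _).const_mul c₂).integrableOn hA h

lemma exists_Egamma_gaussianReal_eq_Ici {γ a : ℝ} (hγ : 0 < γ) (hv : v ≠ 0) (ha : 0 < a) :
    ∃ t, Egamma γ (gaussianReal a v) (gaussianReal 0 v) =
      (gaussianReal a v).real (Ici t) - γ * (gaussianReal 0 v).real (Ici t) := by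
  have hratio := mul_gaussianPDFReal_zero_le_iff hγ hv ha
  refine ⟨(2 * v * log γ + a ^ 2) / (2 * a),
    Egamma_eq_of_neymanPearson measurableSet_Ici (fun A hA hAS ↦ ?_) fun A hA hAS ↦ ?_⟩
  · simpa using mul_gaussianReal_real_le_mul (c₂ := 1) hv hA
      fun x hx ↦ by simpa using (hratio x).2 (hAS hx)
  · simpa using mul_gaussianReal_real_le_mul (c₁ := 1) hv hA
      fun x hx ↦ by simpa using (not_le.1 (mt (hratio x).1 (hAS hx))).le

lemma gaussianReal_real_Ici_add (m d t : ℝ) :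
    (gaussianReal (m + d) v).real (Ici (t + d)) = (gaussianReal m v).real (Ici t) := by
  rw [← gaussianReal_map_add_const, measureReal_def, measureReal_def,
    Measure.map_apply (measurable_add_const d) measurableSet_Ici, preimage_add_const_Ici,
    add_sub_cancel_right]

end Gaussian

/-- For one-dimensional Gaussians with fixed variance `λ²`, the map
`a ↦ E_γ(N(a, λ²) ‖ N(0, λ²))` is non-decreasing in `a ≥ 0`. -/
theorem egamma_gaussian_monotone (γ : ℝ) (hγ : 1 ≤ γ) (l : NNReal) (hl : 0 < l)
    (a b : ℝ) (ha : 0 ≤ a) (hab : a ≤ b) :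
    Egamma γ (gaussianReal a (l ^ 2)) (gaussianReal 0 (l ^ 2))
      ≤ Egamma γ (gaussianReal b (l ^ 2)) (gaussianReal 0 (l ^ 2)) := by
  rcases ha.eq_or_lt with rfl | ha
  · exact (Egamma_self_nonpos hγ _).trans (Egamma_nonneg (by linarith))
  obtain ⟨t, ht⟩ :=
    exists_Egamma_gaussianReal_eq_Ici (γ := γ) (by linarith) (pow_ne_zero 2 hl.ne') ha
  have hshift := gaussianReal_real_Ici_add (v := l ^ 2) a (b - a) t
  rw [add_sub_cancel] at hshift
  calc _ = (gaussianReal a (l ^ 2)).real (Ici t) - γ * (gaussianReal 0 (l ^ 2)).real (Ici t) := ht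
    _ ≤ (gaussianReal b (l ^ 2)).real (Ici (t + (b - a)))
          - γ * (gaussianReal 0 (l ^ 2)).real (Ici (t + (b - a))) := by
      rw [hshift]
      gcongr ?_ - γ * ?_
      exact measureReal_mono (Ici_subset_Ici.2 (by linarith))
    _ ≤ _ := le_Egamma (by linarith) measurableSet_Ici
end
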